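/- arXiv:2407.18599 — 2 statements merged into one kernel-verified Lean document; each statement's English description precedes it below -/
import Mathlib

section
/- Let Σ be a finite alphabet with |Σ| = σ ≥ 2 and let ι, k be natural numbers with k > ι. Let w be a word over Σ with alph(w) = Σ and ι(w) = ι such that: for every word w' over Σ with ι(w') = ι and |w'| ≥ |w| we have |ScatFact_k(w)| ≥ |ScatFact_k(w')|, and for every word w' over Σ with ι(w') = ι and |w'| < |w| we have |ScatFact_k(w)| > |ScatFact_k(w')|. Then |w| = (ι + 1)·(σ − 1)·(k − ι) + ι. -/
open List

universe u
variable {α : Type u}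

/-- `ScatFact k w` is the set of scattered factors (subsequences) of `w` of length exactly `k`. -/
def ScatFact (k : ℕ) (w : List α) : Set (List α) :=
  {v | v.length = k ∧ v.Sublist w}

/-- `w` is `k`-universal over the alphabet `S`: every word of length `k` over `S`
is a scattered factor of `w`. -/
def IsKUniversal [DecidableEq α] (S : Finset α) (k : ℕ) (w : List α) : Prop :=
  ∀ v : List α, v.length = k → (∀ x ∈ v, x ∈ S) → v.Sublist w

/-- The universality index of `w` over the alphabet `S`: the largest `k` such that
`w` is `k`-universal over `S`. -/
noncomputable def univIdx [DecidableEq α] (S : Finset α) (w : List α) : ℕ :=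
  sSup {k | IsKUniversal S k w}

/-- `IsArchFact S w inners modus rest` says that `w` has the arch factorization
`w = ar_1 ⋯ ar_n · rest` over the alphabet `S`, where the `i`-th arch is
`ar_i = inners[i] ++ [modus[i]]`: each arch contains every letter of `S`,
the last letter of each arch occurs only once within the arch, and the
alphabet of the rest is a proper subset of `S`. -/
def IsArchFact [DecidableEq α] (S : Finset α) (w : List α)
    (inners : List (List α)) (modus : List α) (rest : List α) : Prop :=
  inners.length = modus.length ∧
  w = (List.zipWith (fun inn m => inn ++ [m]) inners modus).flatten ++ rest ∧
  (∀ p ∈ List.zip inners modus, ∀ x ∈ S, x ∈ p.1 ++ [p.2]) ∧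
  (∀ p ∈ List.zip inners modus, p.2 ∉ p.1) ∧
  rest.toFinset ⊂ S

/-- `v` is perfect `k`-universal over `S`: `alph(v) = S`, the universality index of `v`
over `S` is `k`, and the rest of its arch factorization over `S` is empty. -/
def IsPerfectUniv [DecidableEq α] (S : Finset α) (k : ℕ) (v : List α) : Prop :=
  v.toFinset = S ∧ univIdx S v = k ∧ ∃ inners modus, IsArchFact S v inners modus []

/-- `v` is minimal perfect `k`-universal over `S`. -/
def IsMinPerfectUniv [DecidableEq α] (S : Finset α) (k : ℕ) (v : List α) : Prop :=
  IsPerfectUniv S k v ∧ ∀ v' : List α, IsPerfectUniv S k v' → v.length ≤ v'.length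

/-- `nextAlphPos w i s` (positions `1`-indexed): the least position `j` such that
`w[i+1..j]` contains exactly `s` distinct letters, or `none` (representing `-1`)
if `w[i+1..|w|]` contains fewer than `s` distinct letters. -/
noncomputable def nextAlphPos [DecidableEq α] (w : List α) (i s : ℕ) : Option ℕ :=
  if (w.drop i).toFinset.card < s then none
  else some (sInf {j | ((w.drop i).take (j - i)).toFinset.card = s})

/-- The letter of `w` at (1-indexed) position `j`. -/
def letterAt [Inhabited α] (w : List α) (j : ℕ) : α := w.getD (j - 1) default

/-- The word over `Fin σ` with `ι` arches, whose first arch is `a_1 a_2 ⋯ a_σ`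
and each later arch is the reverse of the previous one. -/
def wmin (σ ι : ℕ) : List (Fin σ) :=
  ((List.range ι).map (fun i =>
    if i % 2 = 0 then List.finRange σ else (List.finRange σ).reverse)).flatten

/-!
Fix a word `u₀` of length `ι + 1` that is not a scattered factor of `w`. Every length-`k`
scattered factor of `w` avoids `u₀`, and the number of length-`k` words avoiding a word depends
only on its length. Put `K = k - ι` and let `B` be `K` copies of a list of the `σ - 1` letters
other than a fixed `c`. The word `B (c B)^ι` has universality index `ι`, and its length-`k`
scattered factors are exactly the words avoiding `c^(ι+1)`, so it has the largest possible number
of them. The strict maximality of `w` therefore bounds `|w|` by `|B (c B)^ι| = (ι + 1)(σ - 1)K + ι`,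
and the other one forces `w` to contain every length-`k` word avoiding `u₀`.

For the reverse inequality cut `w` at the first occurrence of the first letter `c` of `u₀`: the
prefix contains `b^K` for every `b ≠ c`, and the suffix satisfies the same hypothesis for `u₀`
without its first letter, with the same `K`.
-/

namespace List

variable {α : Type*}

theorem sublist_of_cons_sublist_append_cons {a : α} {s l₁ l₂ : List α} (ha : a ∉ l₁)
    (h : a :: s <+ l₁ ++ a :: l₂) : s <+ l₂ := by
  induction l₁ with
  | nil => exact cons_sublist_cons.1 h
  | cons x l₁ ih =>
    obtain ⟨hax, ha⟩ := ne_and_not_mem_of_not_mem_cons ha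
    rcases sublist_cons_iff.1 h with h | ⟨r, hr, -⟩
    · exact ih ha h
    · exact absurd (cons.inj hr).1 hax

theorem sublist_of_append_sublist_append_cons {a : α} {s t l₁ l₂ : List α} (hs : a ∉ s)
    (ht : ¬ t <+ l₂) (h : s ++ t <+ l₁ ++ a :: l₂) : s <+ l₁ := by
  induction l₁ generalizing s with
  | nil =>
    cases s with
    | nil => exact nil_sublist _
    | cons x s =>
      rcases sublist_cons_iff.1 h with h | ⟨r, hr, -⟩
      · exact absurd ((sublist_append_right _ t).trans ((sublist_cons_self x _).trans h)) ht
      · exact absurd (cons.inj hr).1.symm (ne_and_not_mem_of_not_mem_cons hs).1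
  | cons y l₁ ih =>
    rcases sublist_cons_iff.1 h with h | ⟨r, hr, h⟩
    · exact (ih hs h).cons y
    · cases s with
      | nil => exact nil_sublist _
      | cons x s =>
        obtain ⟨rfl, rfl⟩ := cons.inj hr
        exact (ih (ne_and_not_mem_of_not_mem_cons hs).2 h).cons_cons x

theorem not_cons_sublist_append_of_not_mem {a : α} {s : List α} (ha : a ∉ s) (t : List α) :
    ¬ a :: t <+ s ++ t := by
  induction s with
  | nil => exact fun h => (Nat.lt_succ_self _).not_ge h.length_le
  | cons x s ih =>
    obtain ⟨hax, ha⟩ := ne_and_not_mem_of_not_mem_cons ha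
    intro h
    rcases sublist_cons_iff.1 h with h | ⟨r, hr, -⟩
    · exact ih ha h
    · exact hax (cons.inj hr).1

theorem cons_sublist_cons_iff_of_ne {a x : α} {u v : List α} (h : x ≠ a) :
    a :: u <+ x :: v ↔ a :: u <+ v := by
  refine ⟨fun hs => ?_, fun hs => hs.cons x⟩
  rcases sublist_cons_iff.1 hs with hs | ⟨r, hr, -⟩
  · exact hs
  · exact absurd (cons.inj hr).1.symm h

end List

section Universality

variable {α : Type*} [DecidableEq α] {S : Finset α} {w : List α}

theorem IsKUniversal.mono (hS : S.Nonempty) {m n : ℕ} (h : IsKUniversal S n w) (hmn : m ≤ n) :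
    IsKUniversal S m w := by
  intro v hv hvS
  obtain ⟨a, ha⟩ := hS
  refine (sublist_append_left v (replicate (n - m) a)).trans (h _ ?_ ?_)
  · simp [hv, hmn]
  · simpa [or_imp, forall_and] using ⟨hvS, fun _ => ha⟩

theorem bddAbove_setOf_isKUniversal (hS : S.Nonempty) : BddAbove {k | IsKUniversal S k w} := by
  obtain ⟨a, ha⟩ := hS
  refine ⟨w.length, fun n hn => ?_⟩
  simpa using (hn (replicate n a) (length_replicate ..) (by simp [ha])).length_le

theorem univIdx_eq_of_isKUniversal (hS : S.Nonempty) {i : ℕ} (h : IsKUniversal S i w)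
    (hsucc : ¬ IsKUniversal S (i + 1) w) : univIdx S w = i :=
  le_antisymm (csSup_le ⟨i, h⟩ fun _ hn => not_lt.1 fun hin => hsucc (hn.mono hS hin))
    (le_csSup (bddAbove_setOf_isKUniversal hS) h)

theorem not_isKUniversal_univIdx_succ (hS : S.Nonempty) :
    ¬ IsKUniversal S (univIdx S w + 1) w := fun h =>
  (Nat.lt_succ_self _).not_ge (le_csSup (bddAbove_setOf_isKUniversal hS) h)

theorem exists_cons_not_sublist_of_univIdx_eq (hS : S.Nonempty) {i : ℕ} (h : univIdx S w = i) :
    ∃ a u, u.length = i ∧ ¬ a :: u <+ w := by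
  obtain ⟨v, hv, -, hvw⟩ : ∃ v : List α, v.length = i + 1 ∧ (∀ x ∈ v, x ∈ S) ∧ ¬ v <+ w := by
    simpa [IsKUniversal, h] using not_isKUniversal_univIdx_succ (w := w) hS
  obtain ⟨a, u, rfl⟩ := exists_cons_of_length_eq_add_one hv
  exact ⟨a, u, by simpa using hv, hvw⟩

end Universality

section Avoiders

variable {α : Type*} [Fintype α] [DecidableEq α]

variable (α) in
def wordsOfLength : ℕ → Finset (List α)
  | 0 => {[]}
  | n + 1 => Finset.univ.biUnion fun x => (wordsOfLength n).map ⟨(x :: ·), cons_injective⟩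

theorem mem_wordsOfLength {n : ℕ} {v : List α} : v ∈ wordsOfLength α n ↔ v.length = n := by
  induction n generalizing v with
  | zero => simp [wordsOfLength]
  | succ n ih => cases v <;> simp [wordsOfLength, ih]

theorem card_filter_wordsOfLength_succ (P : List α → Prop) [DecidablePred P] (n : ℕ) :
    ((wordsOfLength α (n + 1)).filter P).card =
      ∑ x, ((wordsOfLength α n).filter fun v => P (x :: v)).card := by
  rw [wordsOfLength, Finset.filter_biUnion, Finset.card_biUnion]
  · simp [Finset.filter_map]
  · intro x _ y _ hxy
    simp only [Finset.disjoint_left, Finset.mem_filter, Finset.mem_map]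
    rintro _ ⟨⟨v, -, rfl⟩, -⟩ ⟨⟨v', -, hv'⟩, -⟩
    exact hxy (cons.inj hv').1.symm

def avoiders (k : ℕ) (u : List α) : Finset (List α) :=
  (wordsOfLength α k).filter fun v => ¬ u <+ v

theorem coe_avoiders (k : ℕ) (u : List α) :
    (avoiders k u : Set (List α)) = {v | v.length = k ∧ ¬ u <+ v} := by
  ext v
  simp [avoiders, mem_wordsOfLength]

theorem scatFact_subset_avoiders (k : ℕ) {u w : List α} (hw : ¬ u <+ w) :
    ScatFact k w ⊆ avoiders k u := by
  rw [coe_avoiders]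
  exact fun v ⟨hl, hv⟩ => ⟨hl, fun h => hw (h.trans hv)⟩

theorem card_avoiders_succ_cons (k : ℕ) (a : α) (u : List α) :
    (avoiders (k + 1) (a :: u)).card =
      (avoiders k u).card + (Fintype.card α - 1) * (avoiders k (a :: u)).card := by
  have hfilter (x : α) : ((wordsOfLength α k).filter fun v => ¬ a :: u <+ x :: v).card =
      if x = a then (avoiders k u).card else (avoiders k (a :: u)).card := by
    split_ifs with h
    · subst h; simp only [cons_sublist_cons]; rfl
    · simp only [cons_sublist_cons_iff_of_ne h]; rfl
  rw [avoiders, card_filter_wordsOfLength_succ, Finset.sum_congr rfl fun x _ => hfilter x,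
    ← Finset.add_sum_erase _ _ (Finset.mem_univ a), if_pos rfl,
    Finset.sum_congr rfl fun x hx => if_neg (Finset.ne_of_mem_erase hx), Finset.sum_const,
    Finset.card_erase_of_mem (Finset.mem_univ a), Finset.card_univ, smul_eq_mul]

theorem card_avoiders_eq_of_length_eq (k : ℕ) {u u' : List α} (h : u.length = u'.length) :
    (avoiders k u).card = (avoiders k u').card := by
  induction k generalizing u u' with
  | zero =>
    cases u <;> cases u' <;> simp_all [avoiders, wordsOfLength, Finset.filter_singleton]
  | succ k ih =>
    cases u with
    | nil => cases u' <;> simp_all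
    | cons a u =>
      cases u' with
      | nil => simp at h
      | cons a' u' =>
        rw [card_avoiders_succ_cons, card_avoiders_succ_cons, ih (by simpa using h), ih h]

end Avoiders

section ExtremalWord

variable {α : Type*} [DecidableEq α]

theorem sublist_flatten_replicate_append (c : α) {e : List α} (he : ∀ x, x ≠ c → x ∈ e)
    {K : ℕ} (hK : 1 ≤ K) : ∀ (v : List α) {A m : ℕ}, A ≤ K → v.count c ≤ m →
      v.length ≤ A + m →
      v <+ (replicate A e).flatten ++ (replicate m (c :: (replicate K e).flatten)).flatten
  | [], _, _, _, _, _ => nil_sublist _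
  | x :: v, A, m, hA, hc, hl => by
    rw [length_cons] at hl
    by_cases hx : x = c
    · subst hx
      rw [count_cons_self] at hc
      obtain ⟨m, rfl⟩ := Nat.exists_eq_add_one.2 (by omega : 0 < m)
      have hv := sublist_flatten_replicate_append x he hK v (m := m) le_rfl (by omega) (by omega)
      show x :: v <+ _ ++ x :: ((replicate K e).flatten ++ _)
      exact (hv.cons_cons x).trans (sublist_append_right _ _)
    · rw [count_cons_of_ne hx] at hc
      cases A with
      | succ A =>
        have hv := sublist_flatten_replicate_append c he hK v (A := A) (by omega) hc (by omega)
        show x :: v <+ (e ++ (replicate A e).flatten) ++ _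
        rw [append_assoc]
        exact (singleton_sublist.2 (he x hx)).append hv
      | zero =>
        -- no copy of `e` is left before the next `c`: skip that `c`, start a fresh block `e^K`
        obtain ⟨m, rfl⟩ := Nat.exists_eq_add_one.2 (by omega : 0 < m)
        obtain ⟨K, rfl⟩ := Nat.exists_eq_add_one.2 hK
        have hv := sublist_flatten_replicate_append c he hK v (A := K) (m := m) (by omega)
          (count_le_length.trans (by omega)) (by omega)
        show x :: v <+ c :: ((e ++ (replicate K e).flatten) ++ _)
        rw [append_assoc]
        exact ((singleton_sublist.2 (he x hx)).append hv).cons c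

variable [Fintype α]

noncomputable def extremalWord (c : α) (K ι : ℕ) : List α :=
  (replicate K (Finset.univ.erase c).toList).flatten ++
    (replicate ι (c :: (replicate K (Finset.univ.erase c).toList).flatten)).flatten

theorem length_extremalWord (c : α) (K ι : ℕ) :
    (extremalWord c K ι).length = (ι + 1) * (Fintype.card α - 1) * K + ι := by
  simp [extremalWord, length_flatten, Finset.card_erase_of_mem]
  ring

theorem count_extremalWord (c : α) (K ι : ℕ) : (extremalWord c K ι).count c = ι := by
  have hc : (Finset.univ.erase c).toList.count c = 0 := count_eq_zero.2 (by simp)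
  simp [extremalWord, count_flatten, hc]

theorem sublist_extremalWord (c : α) {K ι : ℕ} (hK : 1 ≤ K) {v : List α}
    (hc : v.count c ≤ ι) (hl : v.length ≤ K + ι) : v <+ extremalWord c K ι :=
  sublist_flatten_replicate_append c (fun x hx => by simp [hx]) hK v le_rfl hc hl

theorem scatFact_extremalWord (c : α) {K ι : ℕ} (hK : 1 ≤ K) :
    ScatFact (K + ι) (extremalWord c K ι) = avoiders (K + ι) (replicate (ι + 1) c) := by
  rw [coe_avoiders]
  ext v
  simp only [ScatFact, Set.mem_ofPred_eq, replicate_sublist_iff, not_le, Nat.lt_succ_iff]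
  constructor
  · rintro ⟨hl, hv⟩
    exact ⟨hl, count_extremalWord c K ι ▸ hv.count_le c⟩
  · rintro ⟨hl, hc⟩
    exact ⟨hl, sublist_extremalWord c hK hc hl.le⟩

theorem univIdx_extremalWord (c : α) {K ι : ℕ} (hK : 1 ≤ K) :
    univIdx Finset.univ (extremalWord c K ι) = ι := by
  refine univIdx_eq_of_isKUniversal ⟨c, Finset.mem_univ c⟩
    (fun v hv _ => sublist_extremalWord c hK (count_le_length.trans hv.le) (by omega))
    fun h => ?_
  have := (h (replicate (ι + 1) c) (length_replicate ..) (by simp)).count_le c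
  simp [count_extremalWord] at this

end ExtremalWord

section LowerBound

variable {α : Type*} [Fintype α] [DecidableEq α]

theorem card_mul_le_length (S : Finset α) {n : ℕ} {w : List α} (h : ∀ b ∈ S, n ≤ w.count b) :
    S.card * n ≤ w.length :=
  calc S.card * n ≤ ∑ b ∈ S, w.count b := by simpa using Finset.card_nsmul_le_sum S _ n h
    _ ≤ ∑ b, w.count b := Finset.sum_le_sum_of_subset (Finset.subset_univ S)
    _ = w.length := by simpa using Multiset.sum_count_eq_card (s := .univ) (m := (w : Multiset α))

theorem le_length_of_avoiders_sublist [Nontrivial α] (K : ℕ) :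
    ∀ (c : α) (u w : List α), ¬ c :: u <+ w →
      (∀ v : List α, v.length = u.length + K → ¬ c :: u <+ v → v <+ w) →
      (u.length + 1) * (Fintype.card α - 1) * K + u.length ≤ w.length
  | c, [], w, _, hall => by
    have hcount : ∀ b ∈ Finset.univ.erase c, K ≤ w.count b := fun b hb =>
      replicate_sublist_iff.1 <| hall _ (by simp) (by simp [(Finset.ne_of_mem_erase hb).symm])
    simpa [Finset.card_erase_of_mem] using card_mul_le_length _ hcount
  | c, c₂ :: u, w, hw, hall => by
    obtain ⟨d, hd⟩ := exists_ne c₂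
    have hcw : c ∈ w := by
      refine (hall (c :: replicate (u.length + K) d) (by simp; omega) fun h => ?_).subset
        mem_cons_self
      exact hd (eq_of_mem_replicate ((cons_sublist_cons.1 h).subset mem_cons_self)).symm
    obtain ⟨Z, w₂, rfl, hcZ⟩ := eq_append_cons_of_mem hcw
    have hw₂ : ¬ c₂ :: u <+ w₂ := fun h => hw ((h.cons_cons c).trans (sublist_append_right _ _))
    have hall₂ (v : List α) (hv : v.length = u.length + K) (hav : ¬ c₂ :: u <+ v) : v <+ w₂ :=
      sublist_of_cons_sublist_append_cons hcZ <|
        hall (c :: v) (by simp [hv]; omega) fun h => hav (cons_sublist_cons.1 h)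
    -- `b^K ++ c₂ :: u` avoids `c :: c₂ :: u`, and `c₂ :: u` does not fit into `w₂`
    have hZ : ∀ b ∈ Finset.univ.erase c, K ≤ Z.count b := by
      intro b hb
      have hcb : c ∉ replicate K b := by simp [(Finset.ne_of_mem_erase hb).symm]
      exact replicate_sublist_iff.1 <| sublist_of_append_sublist_append_cons hcb hw₂ <|
        hall _ (by simp; omega) (not_cons_sublist_append_of_not_mem hcb _)
    have hZlen := card_mul_le_length _ hZ
    have hw₂len := le_length_of_avoiders_sublist K c₂ u w₂ hw₂ hall₂
    rw [Finset.card_erase_of_mem (Finset.mem_univ c), Finset.card_univ] at hZlen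
    simp only [length_cons, length_append]
    nlinarith

end LowerBound

theorem stmt7_general {α : Type u} [Fintype α] [DecidableEq α]
    (hsigma : 2 ≤ Fintype.card α) (iota k : ℕ) (hk : iota < k)
    (w : List α) (hiw : univIdx Finset.univ w = iota)
    (hmax : ∀ w' : List α, univIdx Finset.univ w' = iota → w.length ≤ w'.length →
        (ScatFact k w').ncard ≤ (ScatFact k w).ncard)
    (hmax' : ∀ w' : List α, univIdx Finset.univ w' = iota → w'.length < w.length →
        (ScatFact k w').ncard < (ScatFact k w).ncard) :
    w.length = (iota + 1) * (Fintype.card α - 1) * (k - iota) + iota := by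
  have : Nontrivial α := Fintype.one_lt_card_iff_nontrivial.1 hsigma
  obtain ⟨c⟩ : Nonempty α := inferInstance
  obtain ⟨K, hK, rfl⟩ : ∃ K, 1 ≤ K ∧ k = K + iota := ⟨k - iota, by omega, by omega⟩
  obtain ⟨a, u, hu, hw⟩ := exists_cons_not_sublist_of_univIdx_eq ⟨c, Finset.mem_univ c⟩ hiw
  have hSF := scatFact_subset_avoiders (K + iota) hw
  have hcard := Set.ncard_le_ncard hSF
  have hw₀ := univIdx_extremalWord c hK (ι := iota)
  have hcard₀ : (ScatFact (K + iota) (extremalWord c K iota)).ncard =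
      (avoiders (K + iota) (a :: u)).card := by
    rw [scatFact_extremalWord c hK, Set.ncard_coe_finset]
    exact card_avoiders_eq_of_length_eq _ (by simp [hu])
  rw [Set.ncard_coe_finset] at hcard
  rw [Nat.add_sub_cancel, ← length_extremalWord c K iota]
  rcases lt_or_ge (extremalWord c K iota).length w.length with hlt | hge
  · exact absurd (hmax' _ hw₀ hlt) (by omega)
  · have hSF_eq := Set.eq_of_subset_of_ncard_le hSF (by simpa [hcard₀] using hmax _ hw₀ hge)
    refine hge.antisymm ?_
    rw [length_extremalWord, ← hu]
    refine le_length_of_avoiders_sublist K a u w hw fun v hv hav => ?_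
    have hv' : v ∈ ScatFact (K + iota) w := hSF_eq ▸ by rw [coe_avoiders]; exact ⟨by omega, hav⟩
    exact hv'.2

theorem stmt7 {α : Type u} [Fintype α] [DecidableEq α]
    (hsigma : 2 ≤ Fintype.card α) (iota k : ℕ) (hk : iota < k)
    (w : List α) (halph : ∀ a : α, a ∈ w) (hiw : univIdx Finset.univ w = iota)
    (hmax : ∀ w' : List α, univIdx Finset.univ w' = iota → w.length ≤ w'.length →
        (ScatFact k w').ncard ≤ (ScatFact k w).ncard)
    (hmax' : ∀ w' : List α, univIdx Finset.univ w' = iota → w'.length < w.length →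
        (ScatFact k w').ncard < (ScatFact k w).ncard) :
    w.length = (iota + 1) * (Fintype.card α - 1) * (k - iota) + iota :=
  stmt7_general hsigma iota k hk w hiw hmax hmax'
end

section
/- Let Σ be a finite alphabet with |Σ| = σ ≥ 2 and let w be a word over Σ with alph(w) = Σ and |w| = ι(w)·σ. Then for all s ∈ [σ] and all j ∈ [|w|] such that either j mod σ = 0 or s ≤ σ − (j mod σ), if j + s ≤ |w| then nextAlphPos_w(j, s) = j + s. -/
open List

universe u
variable {α : Type u}

/-! Let `w` be `ι`-universal of length `ι·σ`. Every prefix of length `m·σ` contains each letter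
exactly `m` times: if a letter `c` occurred fewer than `m` times there, the `m`-th `c` would lie
beyond it, and the part of `w` after that `c` would still be `(ι - m)`-universal while being
shorter than `(ι - m)·σ`. Hence each block `w[mσ+1..(m+1)σ]` is a permutation of the alphabet,
and `s` consecutive positions inside one block carry `s` distinct letters. -/

theorem cons_sublist_of_replicate_append_sublist [DecidableEq α] {c : α} {u q : List α} :
    ∀ {p : List α} {m : ℕ}, replicate m c ++ u <+ p ++ q → p.count c < m → c :: u <+ q
  | [], m + 1, h, _ => (cons_sublist_cons.mpr (sublist_append_right _ u)).trans h
  | x :: p, m, h, hp => by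
    obtain ⟨m, rfl⟩ : ∃ m', m = m' + 1 := ⟨m - 1, by omega⟩
    rw [replicate_succ, cons_append, cons_append] at h
    cases h with
    | cons _ h =>
      exact cons_sublist_of_replicate_append_sublist (by rwa [replicate_succ, cons_append])
        ((count_le_count_cons ..).trans_lt hp)
    | cons_cons _ h =>
      exact cons_sublist_of_replicate_append_sublist h (by simpa using hp)

theorem sum_count_eq_length [Fintype α] [DecidableEq α] (w : List α) :
    ∑ c, w.count c = w.length := by
  simpa using Multiset.sum_count_eq_card (s := Finset.univ) (m := (w : Multiset α)) (by simp)

section Universal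

variable [DecidableEq α] {S : Finset α} {k : ℕ} {w : List α}

theorem isKUniversal_zero : IsKUniversal S 0 w := by
  intro v hv _
  rw [length_eq_zero_iff.mp hv]
  exact nil_sublist w

-- If the set is unbounded (only for `S = ∅`), its `sSup` is the junk value `0`.
theorem isKUniversal_univIdx (S : Finset α) (w : List α) : IsKUniversal S (univIdx S w) w := by
  by_cases hbdd : BddAbove {k | IsKUniversal S k w}
  · exact Nat.sSup_mem ⟨0, isKUniversal_zero⟩ hbdd
  · rw [univIdx, Nat.sSup_of_not_bddAbove hbdd]
    exact isKUniversal_zero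

theorem IsKUniversal.le_count (h : IsKUniversal S k w) {c : α} (hc : c ∈ S) : k ≤ w.count c := by
  have hsub := h (replicate k c) length_replicate fun x hx => eq_of_mem_replicate hx ▸ hc
  simpa using hsub.count_le c

theorem IsKUniversal.tail_drop_of_count_take_lt {m n : ℕ} {c : α} (hc : c ∈ S)
    (h : IsKUniversal S (m + k) w) (hcount : (w.take n).count c < m) :
    IsKUniversal S k (w.drop n).tail := by
  intro u hu hS
  have hsub : replicate m c ++ u <+ w.take n ++ w.drop n := by
    rw [take_append_drop]
    exact h _ (by simp [hu]) fun x hx =>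
      (mem_append.mp hx).elim (fun hx => eq_of_mem_replicate hx ▸ hc) (hS x)
  exact (cons_sublist_of_replicate_append_sublist hsub hcount).tail

end Universal

section Perfect

variable [Fintype α] [DecidableEq α] {w : List α} {ι : ℕ}

theorem IsKUniversal.mul_card_le_length {k : ℕ} (h : IsKUniversal Finset.univ k w) :
    k * Fintype.card α ≤ w.length :=
  calc k * Fintype.card α = ∑ _c : α, k := by simp [mul_comm]
    _ ≤ ∑ c, w.count c := Finset.sum_le_sum fun c _ => h.le_count (Finset.mem_univ c)
    _ = w.length := sum_count_eq_length w

variable [Nonempty α] (hU : IsKUniversal Finset.univ ι w) (hlen : w.length = ι * Fintype.card α)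
include hU hlen

theorem IsKUniversal.le_count_take_mul_card {m : ℕ} (hm : m ≤ ι) (c : α) :
    m ≤ (w.take (m * Fintype.card α)).count c := by
  rcases hm.eq_or_lt with rfl | hm
  · rw [take_of_length_le hlen.le]
    exact hU.le_count (Finset.mem_univ c)
  by_contra! hcount
  have htail := (IsKUniversal.tail_drop_of_count_take_lt (k := ι - m) (Finset.mem_univ c)
    (by rwa [Nat.add_sub_cancel' hm.le]) hcount).mul_card_le_length
  have hpos : 0 < (ι - m) * Fintype.card α := Nat.mul_pos (by omega) Fintype.card_pos
  rw [length_tail, length_drop, hlen] at htail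
  rw [Nat.sub_mul] at htail hpos
  omega

theorem IsKUniversal.count_take_mul_card {m : ℕ} (hm : m ≤ ι) (c : α) :
    (w.take (m * Fintype.card α)).count c = m := by
  have hsum : ∑ _c : α, m = ∑ c, (w.take (m * Fintype.card α)).count c := by
    rw [sum_count_eq_length, length_take, hlen, min_eq_left (Nat.mul_le_mul_right _ hm)]
    simp [mul_comm]
  exact ((Finset.sum_eq_sum_iff_of_le fun c _ => hU.le_count_take_mul_card hlen hm c).mp hsum c
    (Finset.mem_univ c)).symm

theorem IsKUniversal.nodup_take_card_drop_mul_card {m : ℕ} (hm : m < ι) :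
    ((w.drop (m * Fintype.card α)).take (Fintype.card α)).Nodup := by
  refine nodup_iff_count_le_one.mpr fun c => ?_
  have h := hU.count_take_mul_card hlen (m := m + 1) hm c
  rw [add_mul, one_mul, take_add, count_append, hU.count_take_mul_card hlen hm.le c] at h
  omega

end Perfect

theorem nextAlphPos_eq_add_of_nodup [DecidableEq α] {w : List α} {i s : ℕ} (hs : 1 ≤ s)
    (hlen : i + s ≤ w.length) (hnd : ((w.drop i).take s).Nodup) :
    nextAlphPos w i s = some (i + s) := by
  have hcard : ((w.drop i).take s).toFinset.card = s := by
    rw [toFinset_card_of_nodup hnd, length_take, length_drop]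
    omega
  have hmem : i + s ∈ {j | ((w.drop i).take (j - i)).toFinset.card = s} := by simpa using hcard
  have hle : s ≤ (w.drop i).toFinset.card :=
    hcard ▸ Finset.card_le_card fun x hx =>
      mem_toFinset.mpr ((take_sublist s _).subset (mem_toFinset.mp hx))
  rw [nextAlphPos, if_neg (not_lt.mpr hle), Option.some.injEq]
  refine le_antisymm (Nat.sInf_le hmem) (le_csInf ⟨_, hmem⟩ fun j hj => ?_)
  have : s ≤ j - i := hj ▸ (toFinset_card_le _).trans (length_take_le _ _)
  omega

theorem take_drop_sublist_take {l : List α} {r s n : ℕ} (h : r + s ≤ n) :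
    (l.drop r).take s <+ l.take n := by
  rw [← Nat.add_sub_cancel_left (n := r) (m := s), ← drop_take]
  exact (drop_sublist _ _).trans (take_sublist_take_left h)

theorem stmt16_general {α : Type u} [Fintype α] [DecidableEq α]
    (hsigma : 2 ≤ Fintype.card α) (w : List α)
    (hlen : w.length = univIdx Finset.univ w * Fintype.card α)
    (s j : ℕ) (hs1 : 1 ≤ s) (hs2 : s ≤ Fintype.card α)
    (hcase : j % Fintype.card α = 0 ∨ s ≤ Fintype.card α - j % Fintype.card α)
    (hjs : j + s ≤ w.length) :
    nextAlphPos w j s = some (j + s) := by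
  set σ := Fintype.card α
  have : Nonempty α := Fintype.card_pos_iff.mp (by omega)
  have hblock : j / σ < univIdx Finset.univ w := by
    rw [Nat.div_lt_iff_lt_mul (by omega)]
    omega
  have hfit : j % σ + s ≤ σ := by rcases hcase with h | h <;> omega
  refine nextAlphPos_eq_add_of_nodup hs1 hjs
    (((isKUniversal_univIdx _ w).nodup_take_card_drop_mul_card hlen hblock).sublist ?_)
  rw [show w.drop j = (w.drop (j / σ * σ)).drop (j % σ) by rw [drop_drop, Nat.div_add_mod']]
  exact take_drop_sublist_take hfit

theorem stmt16 {α : Type u} [Fintype α] [DecidableEq α]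
    (hsigma : 2 ≤ Fintype.card α) (w : List α) (halph : ∀ a : α, a ∈ w)
    (hlen : w.length = univIdx Finset.univ w * Fintype.card α)
    (s j : ℕ) (hs1 : 1 ≤ s) (hs2 : s ≤ Fintype.card α)
    (hj1 : 1 ≤ j) (hj2 : j ≤ w.length)
    (hcase : j % Fintype.card α = 0 ∨ s ≤ Fintype.card α - j % Fintype.card α)
    (hjs : j + s ≤ w.length) :
    nextAlphPos w j s = some (j + s) :=
  stmt16_general hsigma w hlen s j hs1 hs2 hcase hjs
end
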